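/- arXiv:math/0606619 — 4 statements merged into one kernel-verified Lean document; each statement's English description precedes it below -/
import Mathlib

section
/- For all r, t > 0 and y > 0, the entrance law identity k_{r+t}(y) = ∫₀^∞ p_t(x,y) k_r(x) dx holds, where p_t(x,y) = g_t(x−y) − g_t(x+y) is the absorbing-barrier Brownian transition density on (0,∞). -/
open MeasureTheory Real Set

/-- The Gaussian heat kernel `g_t(x) = (2πt)^{-1/2} exp(-x²/(2t))`. -/
noncomputable def gker (t x : ℝ) : ℝ := (Real.sqrt (2 * π * t))⁻¹ * Real.exp (-x ^ 2 / (2 * t))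

/-- The absorbing-barrier Brownian transition density on `(0,∞)`. -/
noncomputable def pker (t x y : ℝ) : ℝ := gker t (x - y) - gker t (x + y)

/-- The entrance density `k_t(y) = y g_t(y) / t`. -/
noncomputable def kker (t y : ℝ) : ℝ := y * gker t y / t

lemma gker_neg (s u : ℝ) : gker s (-u) = gker s u := by
  simp [gker, neg_sq]

lemma gker_eq_exp (s : ℝ) (u : ℝ) :
    gker s u = (Real.sqrt (2 * π * s))⁻¹ * Real.exp (-(2*s)⁻¹ * u ^ 2) := by
  rw [gker]
  congr 1
  rw [neg_div]
  ring_nf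

/-- Integrability of `x * g_s(x - m)`. -/
lemma integrable_mul_gker {s : ℝ} (hs : 0 < s) (m : ℝ) :
    Integrable (fun x : ℝ => x * gker s (x - m)) := by
  have hb : 0 < (2*s)⁻¹ := by positivity
  have h1 : Integrable (fun u : ℝ => u * Real.exp (-(2*s)⁻¹ * u ^ 2)) :=
    integrable_mul_exp_neg_mul_sq hb
  have h2 : Integrable (fun u : ℝ => Real.exp (-(2*s)⁻¹ * u ^ 2)) :=
    integrable_exp_neg_mul_sq hb
  have key : Integrable (fun x : ℝ =>
      (x - m) * Real.exp (-(2*s)⁻¹ * (x - m) ^ 2)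
      + m * Real.exp (-(2*s)⁻¹ * (x - m) ^ 2)) :=
    (h1.comp_sub_right m).add ((h2.comp_sub_right m).const_mul m)
  have := (key.const_mul ((Real.sqrt (2 * π * s))⁻¹))
  refine this.congr (Filter.Eventually.of_forall fun x => ?_)
  simp only [gker_eq_exp]
  ring

lemma integrable_gker {s : ℝ} (hs : 0 < s) (m : ℝ) :
    Integrable (fun x : ℝ => gker s (x - m)) := by
  have h2 : Integrable (fun u : ℝ => Real.exp (-(2*s)⁻¹ * u ^ 2)) :=
    integrable_exp_neg_mul_sq (by positivity)
  refine ((h2.comp_sub_right m).const_mul ((Real.sqrt (2 * π * s))⁻¹)).congr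
    (Filter.Eventually.of_forall fun x => ?_)
  simp only [gker_eq_exp]

lemma integral_gker {s : ℝ} (hs : 0 < s) :
    ∫ u : ℝ, gker s u = 1 := by
  have hb : 0 < (2*s)⁻¹ := by positivity
  simp_rw [gker_eq_exp s]
  rw [integral_const_mul, integral_gaussian]
  rw [← Real.sqrt_inv, ← Real.sqrt_mul (by positivity)]
  rw [show (2 * π * s)⁻¹ * (π / (2*s)⁻¹) = 1 by field_simp, Real.sqrt_one]

lemma integral_mul_gker_zero {s : ℝ} (hs : 0 < s) :
    ∫ u : ℝ, u * gker s u = 0 := by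
  have h : ∫ u : ℝ, (-u) * gker s (-u) = ∫ u : ℝ, u * gker s u :=
    integral_neg_eq_self (fun u => u * gker s u) volume
  simp only [gker_neg, neg_mul] at h
  rw [integral_neg] at h
  linarith

/-- First moment: `∫ x * g_s(x - m) = m`. -/
lemma integral_mul_gker {s : ℝ} (hs : 0 < s) (m : ℝ) :
    ∫ x : ℝ, x * gker s (x - m) = m := by
  have h1 : Integrable (fun x : ℝ => (x - m) * gker s (x - m)) := by
    have := (integrable_mul_gker hs m).sub ((integrable_gker hs m).const_mul m)
    refine this.congr (Filter.Eventually.of_forall fun x => ?_)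
    simp only [Pi.sub_apply]; ring
  have h2 : Integrable (fun x : ℝ => m * gker s (x - m)) :=
    (integrable_gker hs m).const_mul m
  have : ∫ x : ℝ, x * gker s (x - m)
      = ∫ x : ℝ, ((x - m) * gker s (x - m) + m * gker s (x - m)) := by
    congr 1; funext x; ring
  rw [this, integral_add h1 h2]
  have e1 : ∫ x : ℝ, (x - m) * gker s (x - m) = ∫ u : ℝ, u * gker s u :=
    integral_sub_right_eq_self (fun u => u * gker s u) m
  have e2 : ∫ x : ℝ, m * gker s (x - m) = m * ∫ u : ℝ, gker s u := by
    rw [integral_const_mul]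
    congr 1
    exact integral_sub_right_eq_self (fun u => gker s u) m
  rw [e1, e2, integral_mul_gker_zero hs, integral_gker hs]
  ring

/-- Gaussian product formula. -/
lemma gker_prod {r t : ℝ} (hr : 0 < r) (ht : 0 < t) (x y : ℝ) :
    gker t (x - y) * gker r x
      = gker (r + t) y * gker (r * t / (r + t)) (x - r * y / (r + t)) := by
  have hrt : 0 < r + t := by linarith
  have hπ : 0 < π := Real.pi_pos
  simp only [gker]
  rw [show (Real.sqrt (2*π*t))⁻¹ * Real.exp (-(x-y)^2/(2*t)) * ((Real.sqrt (2*π*r))⁻¹ * Real.exp (-x^2/(2*r)))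
    = ((Real.sqrt (2*π*t))⁻¹ * (Real.sqrt (2*π*r))⁻¹) * (Real.exp (-(x-y)^2/(2*t)) * Real.exp (-x^2/(2*r))) by ring,
    show (Real.sqrt (2*π*(r+t)))⁻¹ * Real.exp (-y^2/(2*(r+t))) * ((Real.sqrt (2*π*(r*t/(r+t))))⁻¹ * Real.exp (-(x - r*y/(r+t))^2/(2*(r*t/(r+t)))))
    = ((Real.sqrt (2*π*(r+t)))⁻¹ * (Real.sqrt (2*π*(r*t/(r+t))))⁻¹) * (Real.exp (-y^2/(2*(r+t))) * Real.exp (-(x - r*y/(r+t))^2/(2*(r*t/(r+t))))) by ring]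
  congr 1
  · rw [← mul_inv, ← mul_inv, ← Real.sqrt_mul (by positivity), ← Real.sqrt_mul (by positivity)]
    congr 2
    field_simp
  · rw [← Real.exp_add, ← Real.exp_add]
    congr 1
    field_simp
    ring

theorem stmt_1 (r t y : ℝ) (hr : 0 < r) (ht : 0 < t) (hy : 0 < y) :
    kker (r + t) y = ∫ x in Ioi (0 : ℝ), pker t x y * kker r x := by
  have hrt : 0 < r + t := by linarith
  set s : ℝ := r * t / (r + t) with hs_def
  have hs : 0 < s := by positivity
  set m : ℝ := r * y / (r + t) with hm_def
  set c : ℝ := gker (r + t) y / r with hc_def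
  set f : ℝ → ℝ := fun x => gker t (x - y) * (x * gker r x / r) with hf_def
  -- f x = c * (x * gker s (x - m))
  have hfe : ∀ x, f x = c * (x * gker s (x - m)) := by
    intro x
    have := gker_prod hr ht x y
    simp only [hf_def, hc_def]
    rw [show gker t (x - y) * (x * gker r x / r) = (gker t (x - y) * gker r x) * x / r by ring,
      this]
    ring
  have hfint : Integrable f := by
    refine ((integrable_mul_gker hs m).const_mul c).congr
      (Filter.Eventually.of_forall fun x => (hfe x).symm)
  -- pointwise identity on the integrand
  have hpt : ∀ x : ℝ, pker t x y * kker r x = f x + f (-x) := by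
    intro x
    simp only [hf_def, pker, kker]
    rw [show -x - y = -(x + y) by ring, gker_neg, gker_neg]
    ring
  calc kker (r + t) y
      = c * (∫ x : ℝ, x * gker s (x - m)) := by
        rw [integral_mul_gker hs m, hc_def, kker, hm_def]
        field_simp
    _ = ∫ x : ℝ, f x := by
        rw [← integral_const_mul]
        exact integral_congr_ae (Filter.Eventually.of_forall fun x => (hfe x).symm)
    _ = (∫ x in Iic (0:ℝ), f x) + ∫ x in Ioi (0:ℝ), f x := by
        rw [← setIntegral_union (Iic_disjoint_Ioi le_rfl) measurableSet_Ioi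
          hfint.integrableOn hfint.integrableOn, Iic_union_Ioi,
          MeasureTheory.Measure.restrict_univ]
    _ = (∫ x in Ioi (0:ℝ), f (-x)) + ∫ x in Ioi (0:ℝ), f x := by
        rw [show ∫ x in Ioi (0:ℝ), f (-x) = ∫ x in Iic (-(0:ℝ)), f x from
          integral_comp_neg_Ioi 0 f, neg_zero]
    _ = ∫ x in Ioi (0:ℝ), (f x + f (-x)) := by
        rw [integral_add hfint.integrableOn ((hfint.comp_neg).integrableOn)]
        ring
    _ = ∫ x in Ioi (0 : ℝ), pker t x y * kker r x :=
        integral_congr_ae (Filter.Eventually.of_forall fun x => (hpt x).symm)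
end

section
/- For all t > 0 and x ∈ (0,∞), ∫₀^∞ p_t(x,y)² dy < 1/(2√(πt)), where p_t(x,y) = g_t(x−y) − g_t(x+y). -/
open MeasureTheory Real Set

theorem stmt_2 (t x : ℝ) (ht : 0 < t) (hx : 0 < x) :
    ∫ y in Ioi (0 : ℝ), (pker t x y) ^ 2 < 1 / (2 * Real.sqrt (π * t)) := by
  have hπ := Real.pi_pos
  have ht' : t ≠ 0 := ne_of_gt ht
  have h2πt : (0:ℝ) < 2 * π * t := by positivity
  set a : ℝ := (Real.sqrt (2 * π * t))⁻¹ with ha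
  have hapos : 0 < a := by
    rw [ha]
    exact inv_pos.2 (Real.sqrt_pos.2 h2πt)
  set E1 : ℝ → ℝ := fun y => Real.exp (-(1/t) * (y - x) ^ 2) with hE1
  set E2 : ℝ → ℝ := fun y => Real.exp (-(1/t) * (y + x) ^ 2) with hE2
  set G : ℝ → ℝ := fun y => Real.exp (-x ^ 2 / t) * Real.exp (-(1/t) * y ^ 2) with hG
  have hbt : (0:ℝ) < 1/t := by positivity
  -- pointwise expansion
  have key : ∀ y, (pker t x y) ^ 2 = a ^ 2 * E1 y + a ^ 2 * E2 y - 2 * a ^ 2 * G y := by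
    intro y
    simp only [pker, gker, ← ha, hE1, hE2, hG]
    have ex1 : Real.exp (-(x - y) ^ 2 / (2 * t)) ^ 2 = Real.exp (-(1/t) * (y - x) ^ 2) := by
      rw [sq, ← Real.exp_add]; congr 1; field_simp; ring
    have ex2 : Real.exp (-(x + y) ^ 2 / (2 * t)) ^ 2 = Real.exp (-(1/t) * (y + x) ^ 2) := by
      rw [sq, ← Real.exp_add]; congr 1; field_simp; ring
    have ex3 : Real.exp (-(x - y) ^ 2 / (2 * t)) * Real.exp (-(x + y) ^ 2 / (2 * t))
        = Real.exp (-x ^ 2 / t) * Real.exp (-(1/t) * y ^ 2) := by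
      rw [← Real.exp_add, ← Real.exp_add]; congr 1; field_simp; ring
    rw [sub_sq, mul_pow, mul_pow, ex1, ex2]
    linear_combination (-2 * a ^ 2) * ex3
  -- integrability
  have hiE1 : Integrable E1 := (integrable_exp_neg_mul_sq hbt).comp_sub_right x
  have hiE2 : Integrable E2 := by
    have := (integrable_exp_neg_mul_sq hbt).comp_sub_right (-x)
    exact this.congr (Filter.Eventually.of_forall fun y => by simp only [sub_neg_eq_add]; rfl)
  have hiG : Integrable G := (integrable_exp_neg_mul_sq hbt).const_mul _
  -- rewrite the integral
  rw [setIntegral_congr_fun measurableSet_Ioi (fun y _ => key y)]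
  have hA : IntegrableOn (fun y => a ^ 2 * E1 y + a ^ 2 * E2 y) (Ioi 0) := by
    apply Integrable.integrableOn
    exact (hiE1.const_mul _).add (hiE2.const_mul _)
  have hB : IntegrableOn (fun y => 2 * a ^ 2 * G y) (Ioi 0) := (hiG.const_mul _).integrableOn
  rw [integral_sub hA hB,
    integral_add (hiE1.const_mul _).integrableOn (hiE2.const_mul _).integrableOn,
    integral_const_mul, integral_const_mul, integral_const_mul]
  -- sum of E1 and E2 integrals
  have hrefl : ∫ y in Ioi (0:ℝ), E2 y = ∫ y in Iic (0:ℝ), E1 y := by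
    have : ∀ y : ℝ, E2 y = E1 (-y) := by
      intro y; simp only [hE1, hE2]; ring_nf
    simp_rw [this]
    rw [integral_comp_neg_Ioi]
    norm_num
  have hsum : (∫ y in Ioi (0:ℝ), E1 y) + ∫ y in Ioi (0:ℝ), E2 y = Real.sqrt (π * t) := by
    rw [hrefl, add_comm (∫ y in Ioi (0:ℝ), E1 y), intervalIntegral.integral_Iic_add_Ioi hiE1.integrableOn hiE1.integrableOn]
    have : ∫ y, E1 y = ∫ y, Real.exp (-(1/t) * y ^ 2) := by
      simp only [hE1]
      exact integral_sub_right_eq_self (fun y => Real.exp (-(1/t) * y ^ 2)) x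
    rw [this, integral_gaussian]
    congr 1
    field_simp
  -- positivity of the cross term
  have hGpos : 0 < ∫ y in Ioi (0:ℝ), G y := by
    rw [setIntegral_pos_iff_support_of_nonneg_ae]
    · have : Function.support G ∩ Ioi 0 = Ioi (0:ℝ) := by
        apply inter_eq_right.2
        intro y _
        simp only [Function.mem_support, hG]
        positivity
      rw [this]
      simp
    · filter_upwards with y
      simp only [hG]; positivity
    · exact hiG.integrableOn
  have ha2 : a ^ 2 * Real.sqrt (π * t) = 1 / (2 * Real.sqrt (π * t)) := by
    have hs : Real.sqrt (π * t) ^ 2 = π * t := Real.sq_sqrt (by positivity)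
    have hspos : 0 < Real.sqrt (π * t) := Real.sqrt_pos.2 (by positivity)
    have hmul : Real.sqrt (π * t) * Real.sqrt (π * t) = π * t :=
      Real.mul_self_sqrt (by positivity)
    have ha2' : a ^ 2 = (2 * π * t)⁻¹ := by
      rw [ha, ← Real.sq_sqrt h2πt.le]
      field_simp
      rw [Real.sqrt_sq (Real.sqrt_nonneg _)]
    rw [ha2', eq_div_iff (by positivity)]
    calc (2 * π * t)⁻¹ * Real.sqrt (π * t) * (2 * Real.sqrt (π * t))
        = (2 * π * t)⁻¹ * (2 * (Real.sqrt (π * t) * Real.sqrt (π * t))) := by ring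
      _ = (2 * π * t)⁻¹ * (2 * (π * t)) := by rw [hmul]
      _ = (2 * π * t)⁻¹ * (2 * π * t) := by ring_nf
      _ = 1 := by field_simp
  have hlt : (0:ℝ) < 2 * a ^ 2 * ∫ y in Ioi (0:ℝ), G y := by positivity
  calc _ < (a ^ 2 * ∫ y in Ioi (0:ℝ), E1 y) + a ^ 2 * ∫ y in Ioi (0:ℝ), E2 y :=
        sub_lt_self _ hlt
    _ = a ^ 2 * Real.sqrt (π * t) := by rw [← mul_add, hsum]
    _ = 1 / (2 * Real.sqrt (π * t)) := ha2
end

section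
/- Let H be a real separable Hilbert space, (T_t)_{t≥0} a C₀-semigroup with ‖T_t‖ ≤ c e^{bt} for constants c ≥ 1, b ≥ 0, and let R_t be symmetric positive nuclear operators satisfying R_{r+t} = T_t R_r T_t* + R_t. Setting g(t) = Tr(R_t), for any 0 < r₁ < t₁ < ⋯ < r_n < t_n ≤ l one has Σ_{j=1}^n [g(t_j) − g(r_j)] ≤ c² e^{2bl} g(Σ_{j=1}^n (t_j − r_j)). -/
open MeasureTheory
open scoped RealInnerProductSpace

lemma aux_integrable_comp {H : Type*} [NormedAddCommGroup H] [InnerProductSpace ℝ H]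
    [MeasurableSpace H] [BorelSpace H] (μ : Measure H) (L : H →L[ℝ] H)
    (hI : Integrable (fun x => ‖x‖ ^ 2) μ) :
    Integrable (fun x => ‖L x‖ ^ 2) μ := by
  refine (hI.const_mul (‖L‖ ^ 2)).mono' ?_ ?_
  · exact ((L.continuous.norm.pow 2)).aestronglyMeasurable
  · filter_upwards with x
    have h1 : ‖L x‖ ≤ ‖L‖ * ‖x‖ := L.le_opNorm x
    rw [Real.norm_eq_abs, abs_of_nonneg (by positivity)]
    nlinarith [norm_nonneg (L x), norm_nonneg x, norm_nonneg L]

lemma aux_moment {H : Type*} [NormedAddCommGroup H] [InnerProductSpace ℝ H]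
    [CompleteSpace H] [MeasurableSpace H] [BorelSpace H]
    {ι : Type*} [Countable ι] (b : HilbertBasis ι ℝ H) (μ : Measure H)
    (L : H →L[ℝ] H) (hI : Integrable (fun x => ‖x‖ ^ 2) μ) :
    HasSum (fun i => ∫ x, ⟪L x, b i⟫ ^ 2 ∂μ) (∫ x, ‖L x‖ ^ 2 ∂μ) := by
  have hLI : Integrable (fun x => ‖L x‖ ^ 2) μ := aux_integrable_comp μ L hI
  have hbn : ∀ i, ‖b i‖ = 1 := fun i => b.orthonormal.1 i
  have hiI : ∀ i, Integrable (fun x => ⟪L x, b i⟫ ^ 2) μ := by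
    intro i
    refine hLI.mono' ?_ ?_
    · exact ((continuous_inner.comp ((L.continuous).prodMk continuous_const)).pow 2).aestronglyMeasurable
    · filter_upwards with x
      have h1 : |⟪L x, b i⟫| ≤ ‖L x‖ * ‖b i‖ := abs_real_inner_le_norm _ _
      rw [hbn i, mul_one] at h1
      rw [Real.norm_eq_abs, abs_of_nonneg (sq_nonneg _)]
      nlinarith [abs_nonneg (⟪L x, b i⟫), neg_abs_le (⟪L x, b i⟫), le_abs_self (⟪L x, b i⟫)]
  have hpt : ∀ x : H, HasSum (fun i => ⟪L x, b i⟫ ^ 2) (‖L x‖ ^ 2) := by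
    intro x
    have h := b.hasSum_inner_mul_inner (L x) (L x)
    have h2 : (fun i => ⟪L x, b i⟫ * ⟪b i, L x⟫) = fun i => ⟪L x, b i⟫ ^ 2 := by
      funext i; rw [real_inner_comm (b i) (L x)]; ring
    rw [h2, real_inner_self_eq_norm_sq] at h
    exact h
  have hmeas : ∀ i, AEMeasurable (fun x => ENNReal.ofReal (⟪L x, b i⟫ ^ 2)) μ := by
    intro i
    exact (ENNReal.measurable_ofReal.comp
      ((continuous_inner.comp ((L.continuous).prodMk continuous_const)).pow 2).measurable).aemeasurable
  have key : ∫⁻ x, ENNReal.ofReal (‖L x‖ ^ 2) ∂μ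
      = ∑' i, ∫⁻ x, ENNReal.ofReal (⟪L x, b i⟫ ^ 2) ∂μ := by
    rw [← lintegral_tsum hmeas]
    refine lintegral_congr fun x => ?_
    rw [← ENNReal.ofReal_tsum_of_nonneg (fun i => sq_nonneg _) (hpt x).summable, (hpt x).tsum_eq]
  have hofL : ENNReal.ofReal (∫ x, ‖L x‖ ^ 2 ∂μ) = ∫⁻ x, ENNReal.ofReal (‖L x‖ ^ 2) ∂μ :=
    ofReal_integral_eq_lintegral_ofReal hLI (Filter.Eventually.of_forall fun x => sq_nonneg _)
  have hofi : ∀ i, ENNReal.ofReal (∫ x, ⟪L x, b i⟫ ^ 2 ∂μ) = ∫⁻ x, ENNReal.ofReal (⟪L x, b i⟫ ^ 2) ∂μ :=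
    fun i => ofReal_integral_eq_lintegral_ofReal (hiI i) (Filter.Eventually.of_forall fun x => sq_nonneg _)
  have key2 : ENNReal.ofReal (∫ x, ‖L x‖ ^ 2 ∂μ)
      = ∑' i, ENNReal.ofReal (∫ x, ⟪L x, b i⟫ ^ 2 ∂μ) := by
    rw [hofL, key]; exact (tsum_congr fun i => (hofi i).symm)
  have hnn : ∀ i, 0 ≤ ∫ x, ⟪L x, b i⟫ ^ 2 ∂μ := fun i => integral_nonneg fun x => sq_nonneg _
  have hsummable : Summable (fun i => ∫ x, ⟪L x, b i⟫ ^ 2 ∂μ) := by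
    have hne : ∑' i, ENNReal.ofReal (∫ x, ⟪L x, b i⟫ ^ 2 ∂μ) ≠ ⊤ := by
      rw [← key2]; exact ENNReal.ofReal_ne_top
    refine (ENNReal.summable_toReal hne).congr fun i => ?_
    rw [ENNReal.toReal_ofReal (hnn i)]
  have htsum : ∑' i, ∫ x, ⟪L x, b i⟫ ^ 2 ∂μ = ∫ x, ‖L x‖ ^ 2 ∂μ := by
    have h := key2
    rw [← ENNReal.ofReal_tsum_of_nonneg hnn hsummable] at h
    exact ((ENNReal.ofReal_eq_ofReal_iff (integral_nonneg fun x => sq_nonneg _)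
      (tsum_nonneg hnn)).mp h).symm
  rw [← htsum]
  exact hsummable.hasSum

/-- For `g(t) = Tr(R_t) = ∫ ‖x‖² μ_t(dx)` with `R_{r+t} = T_t R_r T_t* + R_t` and
`‖T_t‖ ≤ c e^{bt}`, for `0 < r₁ < t₁ < ⋯ < r_n < t_n ≤ l` one has
`Σ_j [g(t_j) − g(r_j)] ≤ c² e^{2bl} g(Σ_j (t_j − r_j))`. -/
theorem stmt_6 {H : Type*} [NormedAddCommGroup H] [InnerProductSpace ℝ H]
    [CompleteSpace H] [TopologicalSpace.SeparableSpace H]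
    [MeasurableSpace H] [BorelSpace H]
    (T R : ℝ → H →L[ℝ] H)
    (hT0 : T 0 = 1)
    (hTsg : ∀ s t : ℝ, 0 ≤ s → 0 ≤ t → T (s + t) = (T s).comp (T t))
    (hTc : ∀ x : H, Continuous fun t : ℝ => T t x)
    (c b : ℝ) (hc : 1 ≤ c) (hb : 0 ≤ b)
    (hTbd : ∀ t : ℝ, 0 ≤ t → ‖T t‖ ≤ c * Real.exp (b * t))
    (hRsym : ∀ t : ℝ, 0 ≤ t → ∀ a x : H, ⟪R t a, x⟫ = ⟪a, R t x⟫)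
    (hRpos : ∀ t : ℝ, 0 ≤ t → ∀ a : H, 0 ≤ ⟪R t a, a⟫)
    (hcoc : ∀ r t : ℝ, 0 ≤ r → 0 ≤ t →
      R (r + t) = (T t).comp ((R r).comp (ContinuousLinearMap.adjoint (T t))) + R t)
    (μ : ℝ → Measure H) (hprob : ∀ t : ℝ, IsProbabilityMeasure (μ t))
    (hcent : ∀ t : ℝ, 0 ≤ t → ∀ a : H, ∫ x, ⟪x, a⟫ ∂ μ t = 0)
    (hcov : ∀ t : ℝ, 0 ≤ t → ∀ a : H, ∫ x, ⟪x, a⟫ ^ 2 ∂ μ t = ⟪R t a, a⟫)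
    (hgauss : ∀ t : ℝ, 0 ≤ t → ∀ a : H,
      ∫ x, Complex.exp (⟪x, a⟫ * Complex.I) ∂ μ t
        = Complex.exp (-(⟪R t a, a⟫ : ℂ) / 2))
    (hint : ∀ t : ℝ, Integrable (fun x => ‖x‖ ^ 2) (μ t))
    (n : ℕ) (r t : Fin n → ℝ) (l : ℝ)
    (hr0 : ∀ j, 0 < r j) (hrt : ∀ j, r j < t j)
    (hchain : ∀ i j : Fin n, i < j → t i < r j)
    (hl : ∀ j, t j ≤ l) :
    ∑ j, ((∫ x, ‖x‖ ^ 2 ∂ μ (t j)) - ∫ x, ‖x‖ ^ 2 ∂ μ (r j))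
      ≤ c ^ 2 * Real.exp (2 * b * l) * ∫ x, ‖x‖ ^ 2 ∂ μ (∑ j, (t j - r j)) := by
  -- a countable Hilbert basis
  obtain ⟨w, b', hbcoe⟩ := exists_hilbertBasis ℝ H
  have hon : Orthonormal ℝ ((↑) : w → H) := hbcoe ▸ b'.orthonormal
  have hcw : Countable w := by
    refine Pairwise.countable_of_isOpen_disjoint
      (s := fun i : w => Metric.ball (i : H) (1/2)) ?_ (fun i => Metric.isOpen_ball)
      (fun i => Metric.nonempty_ball.2 (by norm_num))
    intro i j hij
    refine Metric.ball_disjoint_ball ?_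
    have h2 : ‖(i : H) - (j : H)‖ ^ 2 = 2 := by
      rw [norm_sub_sq_real, hon.1 i, hon.1 j, hon.2 hij]
      norm_num
    have h3 : (1 : ℝ) ≤ ‖(i : H) - (j : H)‖ := by
      nlinarith [norm_nonneg ((i : H) - (j : H))]
    rw [dist_eq_norm]; linarith
  set g : ℝ → ℝ := fun u => ∫ x, ‖x‖ ^ 2 ∂ μ u with hgdef
  have hg0 : ∀ u, 0 ≤ g u := fun u => integral_nonneg fun x => sq_nonneg _
  have hmom : ∀ (u : ℝ) (L : H →L[ℝ] H),
      HasSum (fun i : w => ∫ x, ⟪L x, b' i⟫ ^ 2 ∂ μ u) (∫ x, ‖L x‖ ^ 2 ∂ μ u) :=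
    fun u L => aux_moment b' (μ u) L (hint u)
  -- the increment identity
  have incr : ∀ u v : ℝ, 0 ≤ u → 0 ≤ v →
      g (u + v) = (∫ x, ‖T v x‖ ^ 2 ∂ μ u) + g v := by
    intro u v hu hv
    have h1 := hmom (u + v) 1
    have h3 := hmom v 1
    simp only [ContinuousLinearMap.one_apply] at h1 h3
    have h2 := hmom u (T v)
    have heq : ∀ i : w, (∫ x, ⟪x, b' i⟫ ^ 2 ∂ μ (u + v))
        = (∫ x, ⟪T v x, b' i⟫ ^ 2 ∂ μ u) + ∫ x, ⟪x, b' i⟫ ^ 2 ∂ μ v := by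
      intro i
      have hA : ∫ x, ⟪T v x, b' i⟫ ^ 2 ∂ μ u
          = ⟪R u ((ContinuousLinearMap.adjoint (T v)) (b' i)),
              (ContinuousLinearMap.adjoint (T v)) (b' i)⟫ := by
        rw [← hcov u hu]
        refine integral_congr_ae (Filter.Eventually.of_forall fun x => ?_)
        have hx := ContinuousLinearMap.adjoint_inner_right (T v) x (b' i)
        simp only [hx]
      rw [hcov (u + v) (by linarith) (b' i), hcov v hv (b' i), hA]
      have hc2 := congrArg (fun A : H →L[ℝ] H => ⟪A (b' i), b' i⟫) (hcoc u v hu hv)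
      simp only [ContinuousLinearMap.comp_apply, ContinuousLinearMap.add_apply,
        inner_add_left] at hc2
      rw [hc2]
      congr 1
      exact (ContinuousLinearMap.adjoint_inner_right (T v)
        ((R u) ((ContinuousLinearMap.adjoint (T v)) (b' i))) (b' i)).symm
    have h1' : HasSum (fun i : w => (∫ x, ⟪T v x, b' i⟫ ^ 2 ∂ μ u)
        + ∫ x, ⟪x, b' i⟫ ^ 2 ∂ μ v) (g (u + v)) := by
      refine h1.congr_fun fun i => (heq i).symm
    exact h1'.unique (h2.add h3)
  have hintL : ∀ (u : ℝ) (L : H →L[ℝ] H), Integrable (fun x => ‖L x‖ ^ 2) (μ u) :=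
    fun u L => aux_integrable_comp (μ u) L (hint u)
  -- bookkeeping
  set s : ℕ → ℝ := fun m => if h : m < n then t ⟨m, h⟩ - r ⟨m, h⟩ else 0 with hsdef
  set σ : ℕ → ℝ := fun k => ∑ i ∈ Finset.range k, s i with hσdef
  have hs_nonneg : ∀ m, 0 ≤ s m := by
    intro m
    by_cases h : m < n
    · simp only [hsdef, dif_pos h]; linarith [hrt ⟨m, h⟩]
    · simp [hsdef, dif_neg h]
  have hs_fin : ∀ j : Fin n, s (j : ℕ) = t j - r j := by
    intro j; simp only [hsdef, dif_pos j.isLt]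
  have hσ_nonneg : ∀ k, 0 ≤ σ k :=
    fun k => Finset.sum_nonneg fun i _ => hs_nonneg i
  have hσ_succ : ∀ k : ℕ, σ (k + 1) = s k + σ k := by
    intro k; simp only [hσdef, Finset.sum_range_succ]; ring
  have hσ_le : ∀ (k : ℕ) (h : k < n), σ k ≤ r ⟨k, h⟩ := by
    intro k
    induction k with
    | zero => intro h; simp only [hσdef, Finset.range_zero, Finset.sum_empty]
              exact (hr0 ⟨0, h⟩).le
    | succ k ih =>
      intro h
      have hk : k < n := Nat.lt_of_succ_lt h
      have h1 : σ (k + 1) = σ k + s k := by rw [hσ_succ]; ring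
      have h2 : t ⟨k, hk⟩ < r ⟨k + 1, h⟩ := hchain ⟨k, hk⟩ ⟨k + 1, h⟩ (by simp)
      have h3 : s k = t ⟨k, hk⟩ - r ⟨k, hk⟩ := by simp only [hsdef, dif_pos hk]
      have := ih hk
      rw [h1, h3]; linarith
  have hC : (0:ℝ) ≤ c ^ 2 * Real.exp (2 * b * l) := by positivity
  -- key step per interval
  have hstep : ∀ j : Fin n, g (t j) - g (r j)
      ≤ c ^ 2 * Real.exp (2 * b * l) * (g (σ ((j : ℕ) + 1)) - g (σ (j : ℕ))) := by
    intro j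
    have hrj : 0 ≤ r j := (hr0 j).le
    have hσj : 0 ≤ σ (j : ℕ) := hσ_nonneg _
    have hσle : σ (j : ℕ) ≤ r j := by
      have := hσ_le (j : ℕ) j.isLt
      simpa using this
    set d : ℝ := r j - σ (j : ℕ) with hddef
    have hd0 : 0 ≤ d := by simp only [hddef]; linarith
    have hdl : d ≤ l := by
      have := hl j; have := hrt j; simp only [hddef]; linarith
    have hsj : 0 ≤ s (j : ℕ) := hs_nonneg _
    have e1 : g (t j) = (∫ x, ‖T (r j) x‖ ^ 2 ∂ μ (s (j : ℕ))) + g (r j) := by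
      have h := incr (s (j : ℕ)) (r j) hsj hrj
      rw [hs_fin j] at h ⊢
      have : t j - r j + r j = t j := by ring
      rw [this] at h
      exact h
    have e2 : g (σ ((j : ℕ) + 1)) = (∫ x, ‖T (σ (j : ℕ)) x‖ ^ 2 ∂ μ (s (j : ℕ))) + g (σ (j : ℕ)) := by
      have h := incr (s (j : ℕ)) (σ (j : ℕ)) hsj hσj
      rw [hσ_succ]
      exact h
    rw [e1, e2, add_sub_cancel_right, add_sub_cancel_right]
    -- bound the integral
    have hTr : ∀ x : H, T (r j) x = T d (T (σ (j : ℕ)) x) := by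
      intro x
      have : r j = d + σ (j : ℕ) := by simp only [hddef]; ring
      rw [this, hTsg d (σ (j : ℕ)) hd0 hσj]
      rfl
    have hpt : ∀ x : H, ‖T (r j) x‖ ^ 2
        ≤ c ^ 2 * Real.exp (2 * b * l) * ‖T (σ (j : ℕ)) x‖ ^ 2 := by
      intro x
      rw [hTr x]
      set y := T (σ (j : ℕ)) x
      have h1 : ‖T d y‖ ≤ (c * Real.exp (b * d)) * ‖y‖ :=
        (T d).le_of_opNorm_le (hTbd d hd0) y
      have h2 : ‖T d y‖ ^ 2 ≤ (c * Real.exp (b * d)) ^ 2 * ‖y‖ ^ 2 := by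
        nlinarith [norm_nonneg (T d y), norm_nonneg y, Real.exp_pos (b * d), hc]
      have h3 : (c * Real.exp (b * d)) ^ 2 = c ^ 2 * Real.exp (2 * b * d) := by
        rw [mul_pow, sq (Real.exp (b * d)), ← Real.exp_add]
        ring_nf
      have h4 : Real.exp (2 * b * d) ≤ Real.exp (2 * b * l) :=
        Real.exp_le_exp.2 (by nlinarith)
      rw [h3] at h2
      nlinarith [h2, mul_le_mul_of_nonneg_left h4 (mul_nonneg (sq_nonneg c) (sq_nonneg ‖y‖))]
    calc ∫ x, ‖T (r j) x‖ ^ 2 ∂ μ (s (j : ℕ))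
        ≤ ∫ x, c ^ 2 * Real.exp (2 * b * l) * ‖T (σ (j : ℕ)) x‖ ^ 2 ∂ μ (s (j : ℕ)) := by
          exact integral_mono (hintL _ _) ((hintL _ _).const_mul _) hpt
      _ = c ^ 2 * Real.exp (2 * b * l) * ∫ x, ‖T (σ (j : ℕ)) x‖ ^ 2 ∂ μ (s (j : ℕ)) :=
          integral_const_mul _ _
  -- assemble
  have hσn : σ n = ∑ j, (t j - r j) := by
    have h0 : σ n = ∑ i ∈ Finset.range n, s i := by simp only [hσdef]
    rw [h0, ← Fin.sum_univ_eq_sum_range]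
    exact Finset.sum_congr rfl fun j _ => hs_fin j
  have htel : ∑ j : Fin n, (g (σ ((j : ℕ) + 1)) - g (σ (j : ℕ))) = g (σ n) - g (σ 0) := by
    rw [Fin.sum_univ_eq_sum_range (fun k => g (σ (k + 1)) - g (σ k)) n,
      Finset.sum_range_sub (fun k => g (σ k))]
  have hσ0 : σ 0 = 0 := by simp [hσdef]
  calc ∑ j, (g (t j) - g (r j))
      ≤ ∑ j : Fin n, c ^ 2 * Real.exp (2 * b * l) * (g (σ ((j : ℕ) + 1)) - g (σ (j : ℕ))) :=
        Finset.sum_le_sum fun j _ => hstep j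
    _ = c ^ 2 * Real.exp (2 * b * l) * ∑ j : Fin n, (g (σ ((j : ℕ) + 1)) - g (σ (j : ℕ))) :=
        (Finset.mul_sum _ _ _).symm
    _ = c ^ 2 * Real.exp (2 * b * l) * (g (σ n) - g (σ 0)) := by rw [htel]
    _ ≤ c ^ 2 * Real.exp (2 * b * l) * g (σ n) := by
        have := hg0 (σ 0)
        nlinarith [hg0 (σ n)]
    _ = c ^ 2 * Real.exp (2 * b * l) * g (∑ j, (t j - r j)) := by rw [hσn]
end

section
/- The function t ↦ 2 − 2·Σ_{k=1}^∞ 2^{−k} cos(2^k t) on ℝ is continuous but nowhere differentiable. -/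
open Real Filter Finset Topology

noncomputable def gg (t : ℝ) : ℝ := ∑' k : ℕ, (1 / 2 : ℝ) ^ (k + 1) * Real.cos (2 ^ (k + 1) * t)

lemma summable_pow : Summable (fun k : ℕ => (1/2:ℝ)^(k+1)) := by
  have := (summable_geometric_of_lt_one (by norm_num : (0:ℝ) ≤ 1/2) (by norm_num)).mul_right (1/2)
  simpa [pow_succ] using this

lemma summable_gg (t : ℝ) : Summable (fun k : ℕ => (1/2:ℝ)^(k+1) * Real.cos (2^(k+1) * t)) := by
  apply Summable.of_norm_bounded summable_pow
  intro k
  rw [Real.norm_eq_abs, abs_mul]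
  calc |(1/2:ℝ)^(k+1)| * |Real.cos (2^(k+1)*t)| ≤ |(1/2:ℝ)^(k+1)| * 1 := by
        exact mul_le_mul_of_nonneg_left (Real.abs_cos_le_one _) (abs_nonneg _)
    _ = (1/2:ℝ)^(k+1) := by rw [mul_one, abs_of_nonneg (by positivity)]

lemma continuous_gg : Continuous gg := by
  apply continuous_tsum (u := fun k : ℕ => (1/2:ℝ)^(k+1))
  · intro i; fun_prop
  · exact summable_pow
  · intro k t
    rw [Real.norm_eq_abs, abs_mul]
    calc |(1/2:ℝ)^(k+1)| * |Real.cos (2^(k+1)*t)| ≤ |(1/2:ℝ)^(k+1)| * 1 := by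
          exact mul_le_mul_of_nonneg_left (Real.abs_cos_le_one _) (abs_nonneg _)
      _ = (1/2:ℝ)^(k+1) := by rw [mul_one, abs_of_nonneg (by positivity)]

noncomputable def dd (i : ℕ) : ℝ := 2^i * Real.sin (π / 2^i) / π
noncomputable def ee (i : ℕ) : ℝ := 2^i * (1 - Real.cos (π / 2^i)) / π

lemma dd_zero : dd 0 = 0 := by simp [dd]
lemma dd_one : dd 1 = 2/π := by simp [dd]
lemma ee_zero : ee 0 = 2/π := by simp [ee]; ring

lemma dd_nonneg (i : ℕ) : 0 ≤ dd i := by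
  have h1 : (0:ℝ) < π / 2^i := by positivity
  have h2 : π / 2^i ≤ π := by
    apply div_le_self pi_pos.le
    exact one_le_pow₀ (by norm_num)
  have := Real.sin_nonneg_of_nonneg_of_le_pi h1.le h2
  unfold dd; positivity

lemma dd_le_one (i : ℕ) : dd i ≤ 1 := by
  unfold dd
  rw [div_le_one pi_pos]
  calc (2:ℝ)^i * Real.sin (π/2^i) ≤ 2^i * (π/2^i) := by
        apply mul_le_mul_of_nonneg_left (Real.sin_le (by positivity)) (by positivity)
    _ = π := by field_simp

lemma dd_mono : Monotone dd := by
  apply monotone_nat_of_le_succ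
  intro i
  unfold dd
  rw [div_le_div_iff_of_pos_right pi_pos]
  have hhalf : π / 2^(i+1) = (π / 2^i)/2 := by rw [pow_succ]; ring
  set θ := π / 2^i with hθ
  have hθpos : 0 < θ := by positivity
  have hθle : θ ≤ π := by
    apply div_le_self pi_pos.le
    exact one_le_pow₀ (by norm_num)
  have hsin : Real.sin θ = 2 * Real.sin (θ/2) * Real.cos (θ/2) := by
    have := Real.sin_two_mul (θ/2)
    rw [show 2*(θ/2) = θ by ring] at this
    linarith
  rw [hhalf, hsin, pow_succ]
  have hs2 : 0 ≤ Real.sin (θ/2) := Real.sin_nonneg_of_nonneg_of_le_pi (by linarith) (by linarith [pi_pos])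
  have hc2 : Real.cos (θ/2) ≤ 1 := Real.cos_le_one _
  have h2i : (0:ℝ) < 2^i := by positivity
  nlinarith [mul_nonneg hs2 (sub_nonneg.mpr hc2)]

lemma one_sub_cos_le (θ : ℝ) : 1 - Real.cos θ ≤ θ^2/2 := by
  have h2 : Real.cos θ = 1 - 2 * Real.sin (θ/2)^2 := by
    have h := Real.cos_two_mul (θ/2)
    rw [show 2*(θ/2) = θ by ring] at h
    nlinarith [Real.sin_sq_add_cos_sq (θ/2)]
  have h3 : Real.sin (θ/2)^2 ≤ (θ/2)^2 := by
    have := Real.abs_sin_le_abs (x := θ/2)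
    nlinarith [abs_nonneg (Real.sin (θ/2)), sq_abs (Real.sin (θ/2)), sq_abs (θ/2)]
  nlinarith

lemma ee_nonneg (i : ℕ) : 0 ≤ ee i := by
  have h := Real.cos_le_one (π / 2^i)
  have h2 : (0:ℝ) < 2^i := by positivity
  unfold ee
  have : (0:ℝ) ≤ 1 - Real.cos (π/2^i) := by linarith
  positivity

lemma ee_le (i : ℕ) : ee i ≤ π * (1/2)^(i+1) := by
  unfold ee
  have h1 : 1 - Real.cos (π/2^i) ≤ (π/2^i)^2/2 := one_sub_cos_le _
  have h2 : (0:ℝ) < 2^i := by positivity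
  have key : (2:ℝ)^i * ((π/2^i)^2/2) / π = π * (1/2)^(i+1) := by
    have e1 : ((1:ℝ)/2)^(i+1) = 1/(2^i*2) := by
      rw [one_div_pow, pow_succ]
    rw [e1]
    field_simp
  calc (2:ℝ)^i * (1 - Real.cos (π/2^i)) / π ≤ 2^i * ((π/2^i)^2/2) / π := by
        have h3 := mul_le_mul_of_nonneg_left h1 h2.le
        exact div_le_div_of_nonneg_right h3 pi_pos.le
    _ = π * (1/2)^(i+1) := key


lemma term1  (x : ℝ) (n k : ℕ) (hk : k < n) :
    (1/2:ℝ)^(k+1) * Real.cos (2^(k+1)*(x+π/2^n)) - (1/2:ℝ)^(k+1) * Real.cos (2^(k+1)*(x-π/2^n))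
      = -(2*π/2^n) * (dd (n-1-k) * Real.sin (2^(n-(n-1-k)) * x)) := by
  have hnk : n - (n-1-k) = k + 1 := by omega
  have h2 : (2:ℝ)^(k+1) * 2^(n-1-k) = 2^n := by rw [← pow_add]; congr 1; omega
  have hb : (2:ℝ)^(k+1) * (π/2^n) = π / 2^(n-1-k) := by
    have p1 : ((2:ℝ)^n) ≠ 0 := by positivity
    have p2 : ((2:ℝ)^(n-1-k)) ≠ 0 := by positivity
    field_simp
    linear_combination h2
  have ha1 : (2:ℝ)^(k+1) * (x + π/2^n) = 2^(k+1)*x + π/2^(n-1-k) := by rw [mul_add, hb]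
  have ha2 : (2:ℝ)^(k+1) * (x - π/2^n) = 2^(k+1)*x - π/2^(n-1-k) := by rw [mul_sub, hb]
  rw [hnk, ha1, ha2, Real.cos_add, Real.cos_sub]
  unfold dd
  have p1 : ((2:ℝ)^n) ≠ 0 := by positivity
  have p3 : ((2:ℝ)^(k+1)) ≠ 0 := by positivity
  have hπ : π ≠ 0 := pi_ne_zero
  field_simp
  have hk2 : (1/2:ℝ)^k * 2^k = 1 := by rw [← mul_pow]; norm_num
  linear_combination (Real.sin (2^(k+1)*x) * Real.sin (π/2^(n-1-k)) * (1/2:ℝ)^k) * h2 - (2 * (Real.sin (2^(k+1)*x) * Real.sin (π/2^(n-1-k))) * (2:ℝ)^(n-1-k)) * hk2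

lemma vanish1  (x : ℝ) (n k : ℕ) (hk : n ≤ k) :
    (1/2:ℝ)^(k+1) * Real.cos (2^(k+1)*(x+π/2^n)) - (1/2:ℝ)^(k+1) * Real.cos (2^(k+1)*(x-π/2^n)) = 0 := by
  have h2 : (2:ℝ)^(k-n) * 2^n * 2 = 2^(k+1) := by
    rw [← pow_add, ← pow_succ]; congr 1; omega
  have hm : (2:ℝ)^(k+1) * (π/2^n) = ((2^(k-n):ℕ):ℝ) * (2*π) := by
    push_cast
    have p1 : ((2:ℝ)^n) ≠ 0 := by positivity
    field_simp
    linear_combination -h2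
  have e1 : (2:ℝ)^(k+1) * (x + π/2^n) = 2^(k+1)*x + ((2^(k-n):ℕ):ℝ) * (2*π) := by rw [mul_add, hm]
  have e2 : (2:ℝ)^(k+1) * (x - π/2^n) = 2^(k+1)*x - ((2^(k-n):ℕ):ℝ) * (2*π) := by rw [mul_sub, hm]
  rw [e1, e2, (Real.cos_periodic.nat_mul (2^(k-n))) (2^(k+1)*x),
    (Real.cos_periodic.nat_mul (2^(k-n))).sub_eq (2^(k+1)*x)]
  ring

lemma term2  (x : ℝ) (n k : ℕ) (hk : k < n) :
    (1/2:ℝ)^(k+1) * Real.cos (2^(k+1)*(x+π/2^n)) + (1/2:ℝ)^(k+1) * Real.cos (2^(k+1)*(x-π/2^n))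
      - 2 * ((1/2:ℝ)^(k+1) * Real.cos (2^(k+1)*x))
      = -(2*π/2^n) * (ee (n-1-k) * Real.cos (2^(n-(n-1-k)) * x)) := by
  have hnk : n - (n-1-k) = k + 1 := by omega
  have h2 : (2:ℝ)^(k+1) * 2^(n-1-k) = 2^n := by rw [← pow_add]; congr 1; omega
  have hb : (2:ℝ)^(k+1) * (π/2^n) = π / 2^(n-1-k) := by
    have p1 : ((2:ℝ)^n) ≠ 0 := by positivity
    have p2 : ((2:ℝ)^(n-1-k)) ≠ 0 := by positivity
    field_simp
    linear_combination h2
  have ha1 : (2:ℝ)^(k+1) * (x + π/2^n) = 2^(k+1)*x + π/2^(n-1-k) := by rw [mul_add, hb]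
  have ha2 : (2:ℝ)^(k+1) * (x - π/2^n) = 2^(k+1)*x - π/2^(n-1-k) := by rw [mul_sub, hb]
  rw [hnk, ha1, ha2, Real.cos_add, Real.cos_sub]
  unfold ee
  have p1 : ((2:ℝ)^n) ≠ 0 := by positivity
  have p3 : ((2:ℝ)^(k+1)) ≠ 0 := by positivity
  have hπ : π ≠ 0 := pi_ne_zero
  field_simp
  have hk2 : (1/2:ℝ)^k * 2^k = 1 := by rw [← mul_pow]; norm_num
  linear_combination (Real.cos (2^(k+1)*x) * (1 - Real.cos (π/2^(n-1-k))) * (1/2:ℝ)^k) * h2 - (2 * (Real.cos (2^(k+1)*x) * (1 - Real.cos (π/2^(n-1-k)))) * (2:ℝ)^(n-1-k)) * hk2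

lemma vanish2  (x : ℝ) (n k : ℕ) (hk : n ≤ k) :
    (1/2:ℝ)^(k+1) * Real.cos (2^(k+1)*(x+π/2^n)) + (1/2:ℝ)^(k+1) * Real.cos (2^(k+1)*(x-π/2^n))
      - 2 * ((1/2:ℝ)^(k+1) * Real.cos (2^(k+1)*x)) = 0 := by
  have h2 : (2:ℝ)^(k-n) * 2^n * 2 = 2^(k+1) := by
    rw [← pow_add, ← pow_succ]; congr 1; omega
  have hm : (2:ℝ)^(k+1) * (π/2^n) = ((2^(k-n):ℕ):ℝ) * (2*π) := by
    push_cast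
    have p1 : ((2:ℝ)^n) ≠ 0 := by positivity
    field_simp
    linear_combination -h2
  have e1 : (2:ℝ)^(k+1) * (x + π/2^n) = 2^(k+1)*x + ((2^(k-n):ℕ):ℝ) * (2*π) := by rw [mul_add, hm]
  have e2 : (2:ℝ)^(k+1) * (x - π/2^n) = 2^(k+1)*x - ((2^(k-n):ℕ):ℝ) * (2*π) := by rw [mul_sub, hm]
  rw [e1, e2, (Real.cos_periodic.nat_mul (2^(k-n))) (2^(k+1)*x),
    (Real.cos_periodic.nat_mul (2^(k-n))).sub_eq (2^(k+1)*x)]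
  ring

lemma identity1 (x : ℝ) (n : ℕ) :
    gg (x + π/2^n) - gg (x - π/2^n)
      = -(2*π/2^n) * ∑ i ∈ range n, dd i * Real.sin (2^(n-i)*x) := by
  have h0 : gg (x + π/2^n) - gg (x - π/2^n)
      = ∑' k : ℕ, ((1/2:ℝ)^(k+1) * Real.cos (2^(k+1)*(x+π/2^n))
          - (1/2:ℝ)^(k+1) * Real.cos (2^(k+1)*(x-π/2^n))) := by
    rw [Summable.tsum_sub (summable_gg _) (summable_gg _)]
    rfl
  rw [h0, tsum_eq_sum (s := range n)
    (fun k hk => vanish1 x n k (le_of_not_gt (fun h => hk (mem_range.mpr h)))),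
    ← Finset.sum_range_reflect (fun i => dd i * Real.sin (2^(n-i)*x)) n, Finset.mul_sum]
  exact sum_congr rfl (fun k hk => term1 x n k (mem_range.mp hk))

lemma identity2 (x : ℝ) (n : ℕ) :
    gg (x + π/2^n) + gg (x - π/2^n) - 2 * gg x
      = -(2*π/2^n) * ∑ i ∈ range n, ee i * Real.cos (2^(n-i)*x) := by
  have h0 : gg (x + π/2^n) + gg (x - π/2^n) - 2 * gg x
      = ∑' k : ℕ, ((1/2:ℝ)^(k+1) * Real.cos (2^(k+1)*(x+π/2^n))
          + (1/2:ℝ)^(k+1) * Real.cos (2^(k+1)*(x-π/2^n))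
          - 2 * ((1/2:ℝ)^(k+1) * Real.cos (2^(k+1)*x))) := by
    rw [Summable.tsum_sub ((summable_gg _).add (summable_gg _)) ((summable_gg x).mul_left 2),
      Summable.tsum_add (summable_gg _) (summable_gg _), tsum_mul_left]
    rfl
  rw [h0, tsum_eq_sum (s := range n)
    (fun k hk => vanish2 x n k (le_of_not_gt (fun h => hk (mem_range.mpr h)))),
    ← Finset.sum_range_reflect (fun i => ee i * Real.cos (2^(n-i)*x)) n, Finset.mul_sum]
  exact sum_congr rfl (fun k hk => term2 x n k (mem_range.mp hk))

lemma hh0 : Tendsto (fun n : ℕ => π/2^n) atTop (𝓝 0) := by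
  have h : (fun n : ℕ => π/2^n) = fun n : ℕ => π * (1/2:ℝ)^n := by
    funext n; rw [one_div, inv_pow]; ring
  rw [h]
  simpa using (tendsto_pow_atTop_nhds_zero_of_lt_one (by norm_num : (0:ℝ) ≤ 1/2)
    (by norm_num)).const_mul π

lemma dd_lim : Tendsto dd atTop (𝓝 1) := by
  have hsin : Tendsto (slope Real.sin 0) (𝓝[≠] 0) (𝓝 1) := by
    have := hasDerivAt_iff_tendsto_slope.mp (Real.hasDerivAt_sin 0)
    rwa [Real.cos_zero] at this
  have hθ : Tendsto (fun n : ℕ => π/2^n) atTop (𝓝[≠] 0) := by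
    rw [tendsto_nhdsWithin_iff]
    exact ⟨hh0, Eventually.of_forall fun n => by
      simp only [Set.mem_compl_iff, Set.mem_singleton_iff]
      positivity⟩
  have hcomp := hsin.comp hθ
  have h : (slope Real.sin 0) ∘ (fun n : ℕ => π/2^n) = dd := by
    funext n
    simp only [Function.comp_apply, slope_def_field, Real.sin_zero, sub_zero, dd]
    ring
    rw [inv_inv]
  rwa [h] at hcomp

lemma step1 (x : ℝ)
    (hV : Tendsto (fun n => ∑ i ∈ Finset.range n, (dd (i+1) - dd i) * Real.sin (2^(n-i) * x))
      atTop (𝓝 0)) :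
    Tendsto (fun m => Real.sin (2^m * x)) atTop (𝓝 0) := by
  set s : ℕ → ℝ := fun m => Real.sin (2^m * x) with hs
  set V : ℕ → ℝ := fun n => ∑ i ∈ Finset.range n, (dd (i+1) - dd i) * s (n-i) with hVdef
  set V' : ℕ → ℝ := fun n => ∑ i ∈ Finset.range n, (dd (i+2) - dd (i+1)) * s (n-i) with hV'def
  have habs : ∀ n, |s n| ≤ 1 := fun n => abs_le.mpr ⟨Real.neg_one_le_sin _, Real.sin_le_one _⟩
  have hbdd : IsBoundedUnder (· ≤ ·) atTop (fun n => |s n|) := isBoundedUnder_of ⟨1, habs⟩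
  have hcob : IsCoboundedUnder (· ≤ ·) atTop (fun n => |s n|) :=
    isCoboundedUnder_le_of_eventually_le atTop (x := 0)
      (Eventually.of_forall fun n => abs_nonneg _)
  set S := limsup (fun n => |s n|) atTop with hSdef
  have hS0 : 0 ≤ S :=
    le_limsup_of_frequently_le (Eventually.of_forall fun n => abs_nonneg (s n)).frequently hbdd
  -- core identity
  have core : ∀ n, V (n+1) = V' n + (2/π) * s (n+1) := by
    intro n
    have e0 : V (n+1) = ∑ i ∈ Finset.range (n+1), (dd (i+1) - dd i) * s (n+1-i) := rfl
    rw [e0, Finset.sum_range_succ' (fun i => (dd (i+1) - dd i) * s (n+1-i)) n,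
      dd_zero, dd_one, sub_zero]
    congr 1
    apply Finset.sum_congr rfl
    intro i hi
    congr 2
    omega
  have key : ∀ ε, 0 < ε → S ≤ (π/2 - 1)*S + ((π/2-1) + 2*π)*ε := by
    intro ε hε
    have hSε : (0:ℝ) ≤ S + ε := by linarith
    have h1 : ∀ᶠ n in atTop, |s n| < S + ε :=
      eventually_lt_of_limsup_lt (by linarith) hbdd
    obtain ⟨N, hN⟩ := eventually_atTop.mp h1
    -- bound on V'
    have hbound : ∀ m, |V' (N+m)| ≤ (S+ε)*(1 - 2/π) + (1 - dd (m+1)) := by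
      intro m
      have c_nonneg : ∀ i : ℕ, 0 ≤ dd (i+2) - dd (i+1) :=
        fun i => sub_nonneg.mpr (dd_mono (by omega))
      have step_a : |V' (N+m)| ≤ ∑ i ∈ Finset.range (N+m), (dd (i+2) - dd (i+1)) * |s (N+m-i)| := by
        refine (Finset.abs_sum_le_sum_abs _ _).trans ?_
        apply Finset.sum_le_sum
        intro i hi
        rw [abs_mul, abs_of_nonneg (c_nonneg i)]
      have split : ∑ i ∈ Finset.range (N+m), (dd (i+2) - dd (i+1)) * |s (N+m-i)|
          = (∑ i ∈ Finset.range m, (dd (i+2) - dd (i+1)) * |s (N+m-i)|)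
            + ∑ i ∈ Finset.Ico m (N+m), (dd (i+2) - dd (i+1)) * |s (N+m-i)| := by
        rw [Finset.range_eq_Ico,
          ← Finset.sum_Ico_consecutive _ (Nat.zero_le m) (Nat.le_add_left m N),
          ← Finset.range_eq_Ico]
      have part1 : ∑ i ∈ Finset.range m, (dd (i+2) - dd (i+1)) * |s (N+m-i)|
          ≤ (S+ε) * (1 - 2/π) := by
        calc ∑ i ∈ Finset.range m, (dd (i+2) - dd (i+1)) * |s (N+m-i)|
            ≤ ∑ i ∈ Finset.range m, (dd (i+2) - dd (i+1)) * (S+ε) := by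
              apply Finset.sum_le_sum
              intro i hi
              have hi' := Finset.mem_range.mp hi
              exact mul_le_mul_of_nonneg_left (le_of_lt (hN _ (by omega))) (c_nonneg i)
          _ = (dd (m+1) - dd 1) * (S+ε) := by
              rw [← Finset.sum_mul, Finset.sum_range_sub (fun i => dd (i+1)) m]
          _ ≤ (1 - 2/π) * (S+ε) := by
              apply mul_le_mul_of_nonneg_right _ hSε
              have := dd_le_one (m+1)
              rw [dd_one]; linarith
          _ = (S+ε) * (1 - 2/π) := by ring
      have part2 : ∑ i ∈ Finset.Ico m (N+m), (dd (i+2) - dd (i+1)) * |s (N+m-i)|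
          ≤ 1 - dd (m+1) := by
        have tele : ∑ i ∈ Finset.Ico m (N+m), (dd (i+2) - dd (i+1)) = dd (N+m+1) - dd (m+1) := by
          have e1 := Finset.sum_range_sub (fun i => dd (i+1)) (N+m)
          have e2 := Finset.sum_range_sub (fun i => dd (i+1)) m
          have e3 : ∑ i ∈ Finset.range (N+m), (dd (i+2) - dd (i+1))
              = (∑ i ∈ Finset.range m, (dd (i+2) - dd (i+1)))
                + ∑ i ∈ Finset.Ico m (N+m), (dd (i+2) - dd (i+1)) := by
            rw [Finset.range_eq_Ico,
              ← Finset.sum_Ico_consecutive _ (Nat.zero_le m) (Nat.le_add_left m N),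
              ← Finset.range_eq_Ico]
          simp only [e1, e2] at e3
          linarith
        calc ∑ i ∈ Finset.Ico m (N+m), (dd (i+2) - dd (i+1)) * |s (N+m-i)|
            ≤ ∑ i ∈ Finset.Ico m (N+m), (dd (i+2) - dd (i+1)) * 1 := by
              apply Finset.sum_le_sum
              intro i hi
              exact mul_le_mul_of_nonneg_left (habs _) (c_nonneg i)
          _ = dd (N+m+1) - dd (m+1) := by
              simp only [mul_one]
              exact tele
          _ ≤ 1 - dd (m+1) := by linarith [dd_le_one (N+m+1)]
      rw [split] at step_a
      linarith
    -- tail of dd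
    have hdd_tail : ∀ᶠ m in atTop, 1 - dd (m+1) < ε := by
      have hcomp : Tendsto (fun m : ℕ => dd (m+1)) atTop (𝓝 1) :=
        dd_lim.comp (tendsto_add_atTop_nat 1)
      filter_upwards [hcomp.eventually (eventually_gt_nhds (by linarith : (1:ℝ) - ε < 1))]
        with m hm
      linarith
    obtain ⟨m₁, hm₁⟩ := eventually_atTop.mp hdd_tail
    have hV0 : Tendsto V atTop (𝓝 0) := hV
    have hVsmall : ∀ᶠ n in atTop, |V n| < ε := by
      have h0 := Metric.tendsto_atTop.mp hV0 ε hε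
      obtain ⟨N₃, hN₃⟩ := h0
      refine eventually_atTop.mpr ⟨N₃, fun n hn => ?_⟩
      have := hN₃ n hn
      rwa [Real.dist_eq, sub_zero] at this
    obtain ⟨N₃, hN₃⟩ := eventually_atTop.mp hVsmall
    have claim : ∀ᶠ n in atTop, |s n| ≤ (π/2) * (ε + ((S+ε)*(1-2/π) + ε)) := by
      rw [eventually_atTop]
      refine ⟨N + m₁ + N₃ + 1, fun n hn => ?_⟩
      set m := n - N - 1 with hm
      have hn' : n = N + m + 1 := by omega
      have h2π : (0:ℝ) < 2/π := by positivity
      have hc := core (N+m)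
      have hrepr : (2/π) * s (N+m+1) = V (N+m+1) - V' (N+m) := by linarith
      have habs2 : (2/π) * |s (N+m+1)| ≤ |V (N+m+1)| + |V' (N+m)| := by
        have h4 : |(2/π) * s (N+m+1)| ≤ |V (N+m+1)| + |V' (N+m)| := by
          rw [hrepr]
          exact abs_sub _ _
        rwa [abs_mul, abs_of_nonneg h2π.le] at h4
      have b1 : |V (N+m+1)| < ε := hN₃ _ (by omega)
      have b2 : |V' (N+m)| ≤ (S+ε)*(1-2/π) + (1 - dd (m+1)) := hbound m
      have b3 : 1 - dd (m+1) < ε := hm₁ m (by omega)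
      rw [hn']
      have hmain : (2/π) * |s (N+m+1)| ≤ ε + ((S+ε)*(1-2/π) + ε) := by linarith
      calc |s (N+m+1)| = (π/2) * ((2/π) * |s (N+m+1)|) := by
            field_simp
        _ ≤ (π/2)*(ε + ((S+ε)*(1-2/π) + ε)) :=
            mul_le_mul_of_nonneg_left hmain (by positivity)
    have hlim : S ≤ (π/2) * (ε + ((S+ε)*(1-2/π) + ε)) := limsup_le_of_le hcob claim
    have hid : (π/2)*(ε + ((S+ε)*(1-2/π) + ε)) = (π/2-1)*S + ((π/2-1)+π)*ε := by
      field_simp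
      ring
    have hπε : 0 ≤ π*ε := mul_nonneg pi_pos.le hε.le
    rw [hid] at hlim
    linarith
  -- conclude S ≤ 0, S = 0
  have hq : S ≤ (π/2-1)*S := by
    apply le_of_forall_pos_le_add
    intro δ hδ
    have hC : (0:ℝ) < (π/2-1) + 2*π := by nlinarith [pi_gt_three]
    have hk := key (δ/((π/2-1)+2*π)) (by positivity)
    calc S ≤ (π/2-1)*S + ((π/2-1)+2*π)*(δ/((π/2-1)+2*π)) := hk
      _ = (π/2-1)*S + δ := by
          rw [mul_div_cancel₀ _ (ne_of_gt hC)]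
  have hS_le : S ≤ 0 := by nlinarith [pi_lt_d2, hq]
  have hSeq : S = 0 := le_antisymm hS_le hS0
  have habs_lim : Tendsto (fun n => |s n|) atTop (𝓝 0) := by
    apply tendsto_order.2
    constructor
    · intro a ha
      exact Eventually.of_forall fun n => lt_of_lt_of_le ha (abs_nonneg _)
    · intro a ha
      exact eventually_lt_of_limsup_lt (hS_le.trans_lt ha) hbdd
  exact (tendsto_zero_iff_abs_tendsto_zero s).mpr habs_lim

lemma geo_eq (M : ℕ) : ∑ j ∈ Finset.range M, (1/2:ℝ)^(j+1) = 1 - (1/2)^M := by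
  induction M with
  | zero => simp
  | succ M ih =>
    rw [Finset.sum_range_succ, ih, pow_succ]
    ring

lemma geo_tail (M : ℕ) : ∑ j ∈ Finset.range M, (1/2:ℝ)^(j+1) ≤ 1 := by
  rw [geo_eq]
  have : (0:ℝ) ≤ (1/2)^M := by positivity
  linarith

lemma step2 (x : ℝ) (hu : Tendsto (fun m => Real.cos (2^m * x)) atTop (𝓝 1))
    (hU : Tendsto (fun n => ∑ i ∈ Finset.range n, ee i * Real.cos (2^(n-i) * x)) atTop (𝓝 0)) :
    False := by
  set u : ℕ → ℝ := fun m => Real.cos (2^m * x) with hudef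
  set U : ℕ → ℝ := fun n => ∑ i ∈ Finset.range n, ee i * u (n-i) with hUdef
  have hU0 : Tendsto U atTop (𝓝 0) := hU
  have habs : ∀ m, |u m| ≤ 1 := fun m => abs_le.mpr ⟨Real.neg_one_le_cos _, Real.cos_le_one _⟩
  have hc : (0:ℝ) < 1/π - π/32 := by
    have h1 := pi_gt_three
    have h2 := pi_lt_d2
    rw [sub_pos, div_lt_div_iff₀ (by norm_num) pi_pos]
    nlinarith
  obtain ⟨N₁, hN₁⟩ := eventually_atTop.mp
    (hu.eventually (eventually_gt_nhds (by norm_num : (1/2:ℝ) < 1)))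
  obtain ⟨N₂, hN₂⟩ := Metric.tendsto_atTop.mp hU0 (1/π - π/32) hc
  set n := N₁ + 5 + N₂ with hn
  have hUn : |U n| < 1/π - π/32 := by
    have := hN₂ n (by omega)
    rwa [Real.dist_eq, sub_zero] at this
  -- lower bound for U n
  have split : U n = (∑ i ∈ Finset.range 5, ee i * u (n-i))
      + ∑ i ∈ Finset.Ico 5 n, ee i * u (n-i) := by
    show (∑ i ∈ Finset.range n, ee i * u (n-i)) = _
    rw [Finset.range_eq_Ico, ← Finset.sum_Ico_consecutive _ (Nat.zero_le 5) (by omega : 5 ≤ n),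
      ← Finset.range_eq_Ico]
  have part1 : 1/π ≤ ∑ i ∈ Finset.range 5, ee i * u (n-i) := by
    have h0 : ee 0 * u (n-0) ≥ ee 0 * (1/2) := by
      apply mul_le_mul_of_nonneg_left _ (ee_nonneg 0)
      exact le_of_lt (hN₁ (n-0) (by omega))
    have hterm : ∀ i ∈ Finset.range 5, (0:ℝ) ≤ ee i * u (n-i) := by
      intro i hi
      have hi' := Finset.mem_range.mp hi
      have := hN₁ (n-i) (by omega)
      exact mul_nonneg (ee_nonneg i) (by linarith)
    have hsingle := Finset.single_le_sum hterm (Finset.mem_range.mpr (by norm_num : 0 < 5))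
    have : ee 0 * (1/2) = 1/π := by rw [ee_zero]; ring
    linarith
  have part2 : |∑ i ∈ Finset.Ico 5 n, ee i * u (n-i)| ≤ π/32 := by
    calc |∑ i ∈ Finset.Ico 5 n, ee i * u (n-i)|
        ≤ ∑ i ∈ Finset.Ico 5 n, |ee i * u (n-i)| := Finset.abs_sum_le_sum_abs _ _
      _ ≤ ∑ i ∈ Finset.Ico 5 n, π * (1/2:ℝ)^(i+1) := by
          apply Finset.sum_le_sum
          intro i hi
          rw [abs_mul, abs_of_nonneg (ee_nonneg i)]
          calc ee i * |u (n-i)| ≤ ee i * 1 :=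
                mul_le_mul_of_nonneg_left (habs _) (ee_nonneg i)
            _ ≤ π * (1/2:ℝ)^(i+1) := by rw [mul_one]; exact ee_le i
      _ ≤ π/32 := by
          rw [Finset.sum_Ico_eq_sum_range]
          have e1 : ∀ j, π * (1/2:ℝ)^(5+j+1) = (π/32) * (1/2)^(j+1) := by
            intro j
            rw [show 5+j+1 = (j+1)+5 by omega, pow_add]
            ring
          rw [Finset.sum_congr rfl (fun j _ => e1 j), ← Finset.mul_sum]
          calc (π/32) * ∑ j ∈ Finset.range (n-5), (1/2:ℝ)^(j+1)
              ≤ (π/32) * 1 := by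
                apply mul_le_mul_of_nonneg_left (geo_tail _) (by positivity)
            _ = π/32 := mul_one _
  have : 1/π - π/32 ≤ U n := by
    have := neg_abs_le (∑ i ∈ Finset.Ico 5 n, ee i * u (n-i))
    linarith [split, part1, part2]
  linarith [le_abs_self (U n), hUn]


theorem stmt_10 :
    Continuous (fun t : ℝ => 2 - 2 * ∑' k : ℕ, (1 / 2 : ℝ) ^ (k + 1) * Real.cos (2 ^ (k + 1) * t)) ∧
    ∀ t : ℝ, ¬ DifferentiableAt ℝ
      (fun t : ℝ => 2 - 2 * ∑' k : ℕ, (1 / 2 : ℝ) ^ (k + 1) * Real.cos (2 ^ (k + 1) * t)) t := by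
  constructor
  · exact continuous_const.sub (continuous_const.mul continuous_gg)
  · intro x hd
    -- gg is differentiable at x
    have hdg : DifferentiableAt ℝ gg x := by
      have h1 : DifferentiableAt ℝ
          (fun t : ℝ => (2 - (2 - 2 * ∑' k : ℕ, (1/2:ℝ)^(k+1) * Real.cos (2^(k+1)*t)))/2) x :=
        ((differentiableAt_const 2).sub hd).div_const 2
      have heq : (fun t : ℝ =>
          (2 - (2 - 2 * ∑' k : ℕ, (1/2:ℝ)^(k+1) * Real.cos (2^(k+1)*t)))/2) = gg := by
        funext t
        simp only [gg]
        ring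
      rwa [heq] at h1
    set L := deriv gg x with hLdef
    have hder : HasDerivAt gg L x := hdg.hasDerivAt
    have hslope := hasDerivAt_iff_tendsto_slope.mp hder
    have hplus : Tendsto (fun n : ℕ => x + π/2^n) atTop (𝓝[≠] x) := by
      rw [tendsto_nhdsWithin_iff]
      constructor
      · simpa using tendsto_const_nhds.add hh0
      · refine Eventually.of_forall fun n => ?_
        simp only [Set.mem_compl_iff, Set.mem_singleton_iff]
        have : (0:ℝ) < π/2^n := by positivity
        intro h
        nlinarith [h]
    have hminus : Tendsto (fun n : ℕ => x - π/2^n) atTop (𝓝[≠] x) := by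
      rw [tendsto_nhdsWithin_iff]
      constructor
      · simpa using tendsto_const_nhds.sub hh0
      · refine Eventually.of_forall fun n => ?_
        simp only [Set.mem_compl_iff, Set.mem_singleton_iff]
        have : (0:ℝ) < π/2^n := by positivity
        intro h
        nlinarith [h]
    have hp : Tendsto (fun n : ℕ => slope gg x (x + π/2^n)) atTop (𝓝 L) := hslope.comp hplus
    have hq : Tendsto (fun n : ℕ => slope gg x (x - π/2^n)) atTop (𝓝 L) := hslope.comp hminus
    -- finite-sum representations
    have hWrep : ∀ n : ℕ, (∑ i ∈ Finset.range n, dd i * Real.sin (2^(n-i)*x))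
        = -(slope gg x (x + π/2^n) + slope gg x (x - π/2^n))/2 := by
      intro n
      have h1 := identity1 x n
      rw [slope_def_field, slope_def_field,
        show x + π/2^n - x = π/2^n by ring, show x - π/2^n - x = -(π/2^n) by ring]
      set h := π/(2:ℝ)^n with hh
      have hne : h ≠ 0 := by rw [hh]; positivity
      set a := gg (x + h) with ha
      set b := gg (x - h) with hb
      set c := gg x with hc
      set SS := ∑ i ∈ Finset.range n, dd i * Real.sin (2^(n-i)*x) with hSS
      have h1' : a - b = -(2*h) * SS := by rw [h1, hh]; ring
      clear_value h a b c SS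
      rw [div_neg, ← sub_eq_add_neg, div_sub_div_same,
        show a - c - (b - c) = a - b by ring, h1']
      field_simp

    have hUrep : ∀ n : ℕ, (∑ i ∈ Finset.range n, ee i * Real.cos (2^(n-i)*x))
        = -(slope gg x (x + π/2^n) - slope gg x (x - π/2^n))/2 := by
      intro n
      have h1 := identity2 x n
      rw [slope_def_field, slope_def_field,
        show x + π/2^n - x = π/2^n by ring, show x - π/2^n - x = -(π/2^n) by ring]
      set h := π/(2:ℝ)^n with hh
      have hne : h ≠ 0 := by rw [hh]; positivity
      set a := gg (x + h) with ha
      set b := gg (x - h) with hb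
      set c := gg x with hc
      set SS := ∑ i ∈ Finset.range n, ee i * Real.cos (2^(n-i)*x) with hSS
      have h1' : a + b - 2*c = -(2*h) * SS := by rw [h1, hh]; ring
      clear_value h a b c SS
      rw [div_neg, sub_neg_eq_add, ← add_div,
        show a - c + (b - c) = a + b - 2*c by ring, h1']
      field_simp

    -- W limit
    have hWlim : Tendsto (fun n : ℕ => ∑ i ∈ Finset.range n, dd i * Real.sin (2^(n-i)*x))
        atTop (𝓝 (-L)) := by
      have h2 : Tendsto (fun n : ℕ =>
          -(slope gg x (x + π/2^n) + slope gg x (x - π/2^n))/2) atTop (𝓝 (-(L+L)/2)) :=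
        ((hp.add hq).neg).div_const 2
      have h3 : -(L+L)/2 = -L := by ring
      rw [h3] at h2
      exact h2.congr fun n => (hWrep n).symm
    -- V limit (peeled differences)
    have hVlim : Tendsto (fun n : ℕ =>
        ∑ i ∈ Finset.range n, (dd (i+1) - dd i) * Real.sin (2^(n-i)*x)) atTop (𝓝 0) := by
      have hW1 : Tendsto (fun n : ℕ =>
          ∑ i ∈ Finset.range (n+1), dd i * Real.sin (2^(n+1-i)*x)) atTop (𝓝 (-L)) :=
        hWlim.comp (tendsto_add_atTop_nat 1)
      have hdiff := hW1.sub hWlim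
      rw [sub_self] at hdiff
      refine hdiff.congr fun n => ?_
      have e1 : (∑ i ∈ Finset.range (n+1), dd i * Real.sin (2^(n+1-i)*x))
          = ∑ i ∈ Finset.range n, dd (i+1) * Real.sin (2^(n-i)*x) := by
        rw [Finset.sum_range_succ' (fun i => dd i * Real.sin (2^(n+1-i)*x)) n,
          dd_zero, zero_mul, add_zero]
        apply Finset.sum_congr rfl
        intro i hi
        have h5 : n+1-(i+1) = n-i := by omega
        rw [h5]
      rw [e1, ← Finset.sum_sub_distrib]
      apply Finset.sum_congr rfl
      intro i hi
      ring
    -- Step 1: sin (2^n x) → 0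
    have hs_lim := step1 x hVlim
    -- cos (2^n x) → 1
    have hu_shift : Tendsto (fun n : ℕ => Real.cos (2^(n+1)*x)) atTop (𝓝 1) := by
      have hsq : Tendsto (fun n : ℕ => Real.sin (2^n*x) * Real.sin (2^n*x)) atTop (𝓝 0) := by
        simpa using hs_lim.mul hs_lim
      have h2 : Tendsto (fun n : ℕ => 1 - 2*(Real.sin (2^n*x) * Real.sin (2^n*x)))
          atTop (𝓝 (1 - 2*0)) := tendsto_const_nhds.sub (hsq.const_mul 2)
      rw [show (1:ℝ) - 2*0 = 1 by ring] at h2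
      refine h2.congr fun n => ?_
      have harg : (2:ℝ)^(n+1)*x = 2*(2^n*x) := by rw [pow_succ]; ring
      rw [harg, Real.cos_two_mul]
      have := Real.sin_sq_add_cos_sq (2^n*x)
      nlinarith [this]
    have hu : Tendsto (fun m : ℕ => Real.cos (2^m*x)) atTop (𝓝 1) :=
      (tendsto_add_atTop_iff_nat 1).mp hu_shift
    -- U limit
    have hUlim : Tendsto (fun n : ℕ => ∑ i ∈ Finset.range n, ee i * Real.cos (2^(n-i)*x))
        atTop (𝓝 0) := by
      have h2 : Tendsto (fun n : ℕ =>
          -(slope gg x (x + π/2^n) - slope gg x (x - π/2^n))/2) atTop (𝓝 (-(L-L)/2)) :=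
        ((hp.sub hq).neg).div_const 2
      have h3 : -(L-L)/2 = 0 := by ring
      rw [h3] at h2
      exact h2.congr fun n => (hUrep n).symm
    exact step2 x hu hUlim
end
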